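/- Let A, B ∈ ℝ^{k×k} with B invertible, having polar factorizations A = U_A H_A and B = U_B H_B. Then ‖U_A − U_B‖_F ≤ (2/σ_min(B)) · ‖A − B‖_F, provided ‖A − B‖₂ < σ_min(B). -/

import Mathlib

open Matrix

noncomputable def vecNorm {m : ℕ} (v : Fin m → ℝ) : ℝ :=
  Real.sqrt (∑ i, v i ^ 2)

noncomputable def frobNorm {m n : ℕ} (A : Matrix (Fin m) (Fin n) ℝ) : ℝ :=
  Real.sqrt (∑ i, ∑ j, A i j ^ 2)

/-- spectral (operator) norm w.r.t. Euclidean norms -/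
noncomputable def specNorm {m n : ℕ} (A : Matrix (Fin m) (Fin n) ℝ) : ℝ :=
  sSup {r | ∃ x : Fin n → ℝ, vecNorm x ≤ 1 ∧ r = vecNorm (A.mulVec x)}

/-- smallest singular value (for matrices with at least as many rows as columns) -/
noncomputable def sMin {m n : ℕ} (A : Matrix (Fin m) (Fin n) ℝ) : ℝ :=
  sInf {r | ∃ x : Fin n → ℝ, vecNorm x = 1 ∧ r = vecNorm (A.mulVec x)}

namespace PolarAux

lemma frobSq_nonneg {m n : ℕ} (M : Matrix (Fin m) (Fin n) ℝ) :
    0 ≤ ∑ i, ∑ j, M i j ^ 2 :=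
  Finset.sum_nonneg fun _ _ => Finset.sum_nonneg fun _ _ => sq_nonneg _

lemma frob_eq_trace {m n : ℕ} (M : Matrix (Fin m) (Fin n) ℝ) :
    frobNorm M = Real.sqrt ((Mᵀ * M).trace) := by
  unfold frobNorm
  congr 1
  rw [Matrix.trace, Finset.sum_comm]
  simp [Matrix.diag, Matrix.mul_apply, sq]

lemma frob_orth_left {k m : ℕ} {U : Matrix (Fin k) (Fin k) ℝ} (hU : Uᵀ * U = 1)
    (M : Matrix (Fin k) (Fin m) ℝ) : frobNorm (U * M) = frobNorm M := by
  rw [frob_eq_trace, frob_eq_trace M, Matrix.transpose_mul]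
  congr 2
  rw [Matrix.mul_assoc, ← Matrix.mul_assoc Uᵀ, hU, Matrix.one_mul]

lemma frob_transpose {m n : ℕ} (M : Matrix (Fin m) (Fin n) ℝ) :
    frobNorm Mᵀ = frobNorm M := by
  unfold frobNorm
  rw [Finset.sum_comm]
  rfl

lemma frob_orth_right {k m : ℕ} {U : Matrix (Fin k) (Fin k) ℝ} (hU : U * Uᵀ = 1)
    (M : Matrix (Fin m) (Fin k) ℝ) : frobNorm (M * U) = frobNorm M := by
  rw [← frob_transpose (M * U), Matrix.transpose_mul, frob_orth_left, frob_transpose]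
  rwa [Matrix.transpose_transpose]

noncomputable def toEuc {m n : ℕ} (M : Matrix (Fin m) (Fin n) ℝ) :
    EuclideanSpace ℝ (Fin m × Fin n) := WithLp.toLp 2 (fun p => M p.1 p.2)

lemma frob_eq_norm {m n : ℕ} (M : Matrix (Fin m) (Fin n) ℝ) :
    frobNorm M = ‖toEuc M‖ := by
  rw [EuclideanSpace.norm_eq]
  unfold frobNorm
  congr 1
  rw [Fintype.sum_prod_type]
  simp [toEuc, sq_abs]

lemma frob_neg {m n : ℕ} (M : Matrix (Fin m) (Fin n) ℝ) :
    frobNorm (-M) = frobNorm M := by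
  have : toEuc (-M) = -toEuc M := rfl
  rw [frob_eq_norm, frob_eq_norm M, this, norm_neg]

lemma frob_sub_le {m n : ℕ} (M N : Matrix (Fin m) (Fin n) ℝ) :
    frobNorm (M - N) ≤ frobNorm M + frobNorm N := by
  have : toEuc (M - N) = toEuc M - toEuc N := rfl
  rw [frob_eq_norm, frob_eq_norm M, frob_eq_norm N, this]
  exact norm_sub_le _ _

lemma vecNorm_eq_norm {m : ℕ} (v : EuclideanSpace ℝ (Fin m)) :
    vecNorm v = ‖v‖ := by
  rw [EuclideanSpace.norm_eq]
  unfold vecNorm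
  congr 1
  simp [sq_abs]

lemma vecNorm_smul {m : ℕ} (c : ℝ) (v : Fin m → ℝ) :
    vecNorm (c • v) = |c| * vecNorm v := by
  have h1 : vecNorm (c • v) = ‖c • WithLp.toLp 2 v‖ := vecNorm_eq_norm (c • WithLp.toLp 2 v)
  rw [h1, norm_smul, Real.norm_eq_abs, ← vecNorm_eq_norm]

lemma vecNorm_mulVec_orth {k : ℕ} {U : Matrix (Fin k) (Fin k) ℝ} (hU : Uᵀ * U = 1)
    (y : Fin k → ℝ) : vecNorm (U *ᵥ y) = vecNorm y := by
  unfold vecNorm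
  congr 1
  have h1 : ∑ i, (U *ᵥ y) i ^ 2 = (U *ᵥ y) ⬝ᵥ (U *ᵥ y) := by
    simp [dotProduct, sq]
  have h2 : ∑ i, y i ^ 2 = y ⬝ᵥ y := by simp [dotProduct, sq]
  rw [h1, h2, Matrix.dotProduct_mulVec, ← Matrix.vecMul_transpose,
    Matrix.vecMul_vecMul, hU, Matrix.vecMul_one]

/-- key entrywise Sylvester bound -/
lemma sylvester_bound {k : ℕ} (σ : ℝ) (hσ : 0 < σ) (d e : Fin k → ℝ)
    (hd : ∀ i, 0 ≤ d i) (he : ∀ j, σ ≤ e j)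
    (T G : Matrix (Fin k) (Fin k) ℝ)
    (h : ∀ i j, (d i + e j) * T i j = G i j) :
    frobNorm T ≤ frobNorm G / σ := by
  rw [le_div_iff₀ hσ]
  have key : σ ^ 2 * (∑ i, ∑ j, T i j ^ 2) ≤ ∑ i, ∑ j, G i j ^ 2 := by
    rw [Finset.mul_sum]
    refine Finset.sum_le_sum fun i _ => ?_
    rw [Finset.mul_sum]
    refine Finset.sum_le_sum fun j _ => ?_
    rw [← h i j, mul_pow]
    have hle : σ ≤ d i + e j := le_add_of_nonneg_of_le (hd i) (he j)
    have : σ ^ 2 ≤ (d i + e j) ^ 2 := pow_le_pow_left₀ hσ.le hle 2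
    exact mul_le_mul_of_nonneg_right this (sq_nonneg _)
  calc frobNorm T * σ = Real.sqrt (σ ^ 2 * ∑ i, ∑ j, T i j ^ 2) := by
        rw [Real.sqrt_mul (sq_nonneg σ), Real.sqrt_sq hσ.le, mul_comm]
        rfl
    _ ≤ Real.sqrt (∑ i, ∑ j, G i j ^ 2) := Real.sqrt_le_sqrt key
    _ = frobNorm G := rfl

end PolarAux

open PolarAux

/-- polar factor perturbation, cf. Higham: if A = U_A H_A and
B = U_B H_B are polar factorizations, B is invertible, and ‖A−B‖₂ < σ_min(B),
then ‖U_A − U_B‖_F ≤ (2/σ_min(B))·‖A−B‖_F. -/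
theorem polar_factor_perturbation
    (k : ℕ) (A B UA HA UB HB : Matrix (Fin k) (Fin k) ℝ)
    (hUA : UAᵀ * UA = 1) (hHA : HA.PosSemidef) (hA : A = UA * HA)
    (hUB : UBᵀ * UB = 1) (hHB : HB.PosSemidef) (hB : B = UB * HB)
    (hBinv : IsUnit B)
    (hpert : specNorm (A - B) < sMin B) :
    frobNorm (UA - UB) ≤ (2 / sMin B) * frobNorm (A - B) := by
  -- notation
  set σ := sMin B with hσdef
  -- σ > 0
  have hspec0 : (0:ℝ) ≤ specNorm (A - B) := by
    apply Real.sSup_nonneg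
    rintro r ⟨x, -, rfl⟩
    exact Real.sqrt_nonneg _
  have hσ : 0 < σ := lt_of_le_of_lt hspec0 hpert
  -- orthogonality both ways
  have hUA' : UA * UAᵀ = 1 := mul_eq_one_comm.mp hUA
  have hUB' : UB * UBᵀ = 1 := mul_eq_one_comm.mp hUB
  -- symmetry of the psd factors
  have hHAs : HAᵀ = HA := by
    rw [← Matrix.conjTranspose_eq_transpose_of_trivial]; exact hHA.1
  have hHBs : HBᵀ = HB := by
    rw [← Matrix.conjTranspose_eq_transpose_of_trivial]; exact hHB.1
  -- Sylvester equation
  set S : Matrix (Fin k) (Fin k) ℝ := UAᵀ * UB - 1 with hSdef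
  set E : Matrix (Fin k) (Fin k) ℝ := A - B with hEdef
  set F : Matrix (Fin k) (Fin k) ℝ := Eᵀ * UB - UAᵀ * E with hFdef
  have e1 : Aᵀ * UB = HA * (UAᵀ * UB) := by
    rw [hA, Matrix.transpose_mul, hHAs, Matrix.mul_assoc]
  have e2 : Bᵀ * UB = HB := by
    rw [hB, Matrix.transpose_mul, hHBs, Matrix.mul_assoc, hUB, Matrix.mul_one]
  have e3 : UAᵀ * A = HA := by
    rw [hA, ← Matrix.mul_assoc, hUA, Matrix.one_mul]
  have e4 : UAᵀ * B = (UAᵀ * UB) * HB := by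
    rw [hB, Matrix.mul_assoc]
  have hSyl : HA * S + S * HB = F := by
    rw [hSdef, hFdef, hEdef, Matrix.transpose_sub, Matrix.sub_mul, Matrix.sub_mul,
      Matrix.mul_sub, Matrix.mul_sub, Matrix.mul_one, Matrix.one_mul, e1, e2, e3, e4]
    abel
  -- spectral decompositions
  have hA1 : HA.IsHermitian := hHA.1
  have hB1 : HB.IsHermitian := hHB.1
  set P : Matrix (Fin k) (Fin k) ℝ := (hA1.eigenvectorUnitary : Matrix (Fin k) (Fin k) ℝ) with hPdef
  set Q : Matrix (Fin k) (Fin k) ℝ := (hB1.eigenvectorUnitary : Matrix (Fin k) (Fin k) ℝ) with hQdef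
  set dA := hA1.eigenvalues with hdAdef
  set dB := hB1.eigenvalues with hdBdef
  have hstarP : star P = Pᵀ := by
    rw [Matrix.star_eq_conjTranspose, Matrix.conjTranspose_eq_transpose_of_trivial]
  have hstarQ : star Q = Qᵀ := by
    rw [Matrix.star_eq_conjTranspose, Matrix.conjTranspose_eq_transpose_of_trivial]
  have hP1 : Pᵀ * P = 1 := by rw [← hstarP]; exact Unitary.coe_star_mul_self _
  have hP2 : P * Pᵀ = 1 := by rw [← hstarP]; exact Unitary.coe_mul_star_self _
  have hQ1 : Qᵀ * Q = 1 := by rw [← hstarQ]; exact Unitary.coe_star_mul_self _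
  have hQ2 : Q * Qᵀ = 1 := by rw [← hstarQ]; exact Unitary.coe_mul_star_self _
  have hAspec : HA = P * Matrix.diagonal dA * Pᵀ := by
    have := hA1.spectral_theorem
    rwa [Unitary.conjStarAlgAut_apply, hstarP] at this
  have hBspec : HB = Q * Matrix.diagonal dB * Qᵀ := by
    have := hB1.spectral_theorem
    rwa [Unitary.conjStarAlgAut_apply, hstarQ] at this
  have hPA : Pᵀ * HA = Matrix.diagonal dA * Pᵀ := by
    rw [hAspec, ← Matrix.mul_assoc, ← Matrix.mul_assoc, hP1, Matrix.one_mul]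
  have hQB : HB * Q = Q * Matrix.diagonal dB := by
    rw [hBspec, Matrix.mul_assoc, hQ1, Matrix.mul_one]
  set T : Matrix (Fin k) (Fin k) ℝ := Pᵀ * S * Q with hTdef
  set G : Matrix (Fin k) (Fin k) ℝ := Pᵀ * F * Q with hGdef
  have hTG : Matrix.diagonal dA * T + T * Matrix.diagonal dB = G := by
    rw [hGdef, ← hSyl, Matrix.mul_add, Matrix.add_mul]
    congr 1
    · rw [← Matrix.mul_assoc Pᵀ HA S, hPA, Matrix.mul_assoc (Matrix.diagonal dA) Pᵀ S,
        Matrix.mul_assoc (Matrix.diagonal dA) (Pᵀ * S) Q, ← hTdef]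
    · rw [Matrix.mul_assoc Pᵀ (S * HB) Q, Matrix.mul_assoc S HB Q, hQB,
        ← Matrix.mul_assoc S Q, ← Matrix.mul_assoc Pᵀ (S * Q),
        ← Matrix.mul_assoc Pᵀ S Q, ← hTdef]
  have hentry : ∀ i j, (dA i + dB j) * T i j = G i j := by
    intro i j
    have h := congrFun (congrFun hTG i) j
    simp only [Matrix.add_apply, Matrix.diagonal_mul, Matrix.mul_diagonal] at h
    rw [add_mul, mul_comm (dB j)] at *
    linarith [h]
  -- eigenvalue bounds
  have hdA : ∀ i, 0 ≤ dA i := hHA.eigenvalues_nonneg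
  have hbdd : BddBelow {r | ∃ x : Fin k → ℝ, vecNorm x = 1 ∧ r = vecNorm (B.mulVec x)} := by
    refine ⟨0, ?_⟩
    rintro r ⟨x, -, rfl⟩
    exact Real.sqrt_nonneg _
  have hdB : ∀ j, σ ≤ dB j := by
    intro j
    set v : EuclideanSpace ℝ (Fin k) := hB1.eigenvectorBasis j with hvdef
    have hv1 : vecNorm ⇑v = 1 := by
      rw [vecNorm_eq_norm]; exact (hB1.eigenvectorBasis).orthonormal.1 j
    have hBv : vecNorm (B *ᵥ ⇑v) = dB j := by
      rw [hB, ← Matrix.mulVec_mulVec, hB1.mulVec_eigenvectorBasis j,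
        Matrix.mulVec_smul, vecNorm_smul, vecNorm_mulVec_orth hUB, hv1,
        mul_one, abs_of_nonneg (hHB.eigenvalues_nonneg j)]
    exact csInf_le hbdd ⟨⇑v, hv1, hBv.symm⟩
  -- Sylvester bound
  have hkey : frobNorm T ≤ frobNorm G / σ :=
    sylvester_bound σ hσ dA dB hdA hdB T G hentry
  -- Frobenius norm identities
  have hPt : Pᵀᵀ * Pᵀ = 1 := by rw [Matrix.transpose_transpose]; exact hP2
  have hUAt : UAᵀᵀ * UAᵀ = 1 := by rw [Matrix.transpose_transpose]; exact hUA'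
  have hfT : frobNorm T = frobNorm S := by
    rw [hTdef, frob_orth_right hQ2, frob_orth_left hPt]
  have hfG : frobNorm G = frobNorm F := by
    rw [hGdef, frob_orth_right hQ2, frob_orth_left hPt]
  have hfS : frobNorm (UA - UB) = frobNorm S := by
    have h1 : UA - UB = UA * (-S) := by
      rw [hSdef, neg_sub, Matrix.mul_sub, Matrix.mul_one, ← Matrix.mul_assoc,
        hUA', Matrix.one_mul]
    rw [h1, frob_orth_left hUA, frob_neg]
  have hfF : frobNorm F ≤ 2 * frobNorm E := by
    calc frobNorm F ≤ frobNorm (Eᵀ * UB) + frobNorm (UAᵀ * E) := frob_sub_le _ _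
      _ = frobNorm E + frobNorm E := by
          rw [frob_orth_right hUB', frob_transpose, frob_orth_left hUAt]
      _ = 2 * frobNorm E := by ring
  -- conclude
  calc frobNorm (UA - UB) = frobNorm T := by rw [hfS, hfT]
    _ ≤ frobNorm G / σ := hkey
    _ = frobNorm F / σ := by rw [hfG]
    _ ≤ (2 * frobNorm E) / σ := by gcongr
    _ = (2 / σ) * frobNorm E := by ring
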